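/- Let Γ ≤ Sim_L(ℝ^{m+2}) act freely and properly discontinuously on ℝ^{m+2}. Suppose Γ contains a pure translation x ↦ x + v by a vector v with Q(v) ≠ 0. Then every element of Γ has similarity factor λ = 1. -/

import Mathlib

noncomputable section

/-- `Vec n` is the euclidean space `ℝ^n`. -/
abbrev Vec (n : ℕ) : Type := Fin n → ℝ

/-- The group of invertible affine transformations of `ℝ^n`. -/
abbrev AffGroup (n : ℕ) := Vec n ≃ᵃ[ℝ] Vec n

/-- The standard Lorentz quadratic form `Q(x) = x₁² + ⋯ + x_{m+1}² − x_{m+2}²` on `ℝ^{m+2}`. -/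
def lorentzQ (m : ℕ) (x : Vec (m + 2)) : ℝ :=
  (∑ i : Fin (m + 1), x i.castSucc ^ 2) - x (Fin.last (m + 1)) ^ 2

/-- Membership in the Lorentzian similarity group
`Sim_L(ℝ^{m+2}) = ℝ^{m+2} ⋊ (O(m+1,1) × ℝ^+)`: the linear part is `λ • A` with `λ > 0`
and `A` a linear map preserving the Lorentz form. -/
def InSimL (m : ℕ) (g : AffGroup (m + 2)) : Prop :=
  ∃ (lam : ℝ) (A : Vec (m + 2) →ₗ[ℝ] Vec (m + 2)), 0 < lam ∧
    (∀ v, lorentzQ m (A v) = lorentzQ m v) ∧ ∀ v, g.linear v = lam • A v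

/-- Properly discontinuous action on `ℝ^n`. -/
def ProperlyDisc {n : ℕ} (Γ : Subgroup (AffGroup n)) : Prop :=
  ∀ K : Set (Vec n), IsCompact K →
    {γ : AffGroup n | γ ∈ Γ ∧ (⇑γ '' K ∩ K).Nonempty}.Finite

/-- Free action on `ℝ^n`. -/
def FreeAction {n : ℕ} (Γ : Subgroup (AffGroup n)) : Prop :=
  ∀ γ ∈ Γ, (∃ x : Vec n, γ x = x) → γ = 1

/-- Cocompact action on `ℝ^n`: some compact set meets every orbit. -/
def CocompactAction {n : ℕ} (Γ : Subgroup (AffGroup n)) : Prop :=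
  ∃ K : Set (Vec n), IsCompact K ∧ ∀ x : Vec n, ∃ γ ∈ Γ, γ x ∈ K

/-!
Let `B` be the symmetric bilinear form with `B(x, x) = Q x`, and let `γ ∈ Γ` have linear part
`L` with `Q ∘ L = μ Q`, where `μ = λ²`; replacing `γ` by `γ⁻¹` we may assume `μ < 1`. If `L`
fixed no nonzero vector, `γ` would have a fixed point, so freeness gives `L u = u` with `u ≠ 0`,
hence `u` is lightlike. Then `B(u, ·)` is an eigenvector of the transpose of `L` for `μ`, so `L`
has a lightlike `μ`-eigenvector `u'` with `B(u, u') = 1`. Under `L` the quantities `B(u, x)`,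
`B(u', x)` and `Q x` are multiplied by `μ`, `1` and `μ`, and `Q` is positive definite on
`{u, u'}^⊥`, so the orbit `Lᵏ v` stays bounded. But `γᵏ τ γ⁻ᵏ` is the translation by `Lᵏ v`, and
these vectors are pairwise distinct because `Q (Lᵏ v) = μᵏ Q v` with `Q v ≠ 0`. So infinitely many
elements of `Γ` move the origin into the closed ball of radius `sup ‖Lᵏ v‖`, contradicting proper
discontinuity.
-/

theorem Module.End.HasEigenvalue.of_dualMap {K V : Type*} [Field K] [AddCommGroup V] [Module K V]
    [FiniteDimensional K V] {f : Module.End K V} {μ : K}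
    (h : Module.End.HasEigenvalue f.dualMap μ) : f.HasEigenvalue μ := by
  rw [Module.End.hasEigenvalue_iff, Module.End.eigenspace_def,
    ← LinearMap.det_eq_zero_iff_ker_ne_bot] at h ⊢
  have : (f - μ • 1).dualMap = f.dualMap - μ • 1 := by ext; simp
  rwa [← LinearMap.det_dualMap, this]

theorem AffineEquiv.exists_apply_eq_self {k V : Type*} [Field k] [AddCommGroup V] [Module k V]
    [FiniteDimensional k V] (e : V ≃ᵃ[k] V) (h : ∀ u : V, e.linear u = u → u = 0) :
    ∃ x : V, e x = x := by
  have hinj : Function.Injective (LinearMap.id - e.linear.toLinearMap : V →ₗ[k] V) := by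
    rw [← LinearMap.ker_eq_bot, LinearMap.ker_eq_bot']
    intro u hu
    exact h u (sub_eq_zero.1 hu).symm
  obtain ⟨x, hx⟩ := LinearMap.injective_iff_surjective.1 hinj (e 0)
  refine ⟨x, ?_⟩
  have he := e.map_vadd 0 x
  simp only [vadd_eq_add, add_zero] at he
  simp only [LinearMap.sub_apply, LinearMap.id_apply, LinearEquiv.coe_coe] at hx
  rw [he, ← hx]
  abel

theorem sq_norm_le_sum_sq {n : ℕ} (x : Fin n → ℝ) : ‖x‖ ^ 2 ≤ ∑ i, x i ^ 2 := by
  refine (Real.le_sqrt (norm_nonneg x) (by positivity)).1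
    ((pi_norm_le_iff_of_nonneg (Real.sqrt_nonneg _)).2 fun i => Real.abs_le_sqrt ?_)
  exact Finset.single_le_sum (fun j _ => sq_nonneg (x j)) (Finset.mem_univ i)

section Lorentz

variable {m : ℕ}

def lorentzB (m : ℕ) : LinearMap.BilinForm ℝ (Vec (m + 2)) :=
  Matrix.toBilin' (Matrix.diagonal (Fin.lastCases (-1) fun _ => 1))

theorem lorentzB_apply (x y : Vec (m + 2)) :
    lorentzB m x y = (∑ i : Fin (m + 1), x i.castSucc * y i.castSucc)
      - x (Fin.last (m + 1)) * y (Fin.last (m + 1)) := by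
  simp only [lorentzB, Matrix.toBilin'_apply', dotProduct, Matrix.mulVec_diagonal]
  rw [Fin.sum_univ_castSucc]
  simp [mul_comm, sub_eq_add_neg]

theorem lorentzB_self (x : Vec (m + 2)) : lorentzB m x x = lorentzQ m x := by
  simp [lorentzB_apply, lorentzQ, sq]

theorem lorentzB_comm (x y : Vec (m + 2)) : lorentzB m x y = lorentzB m y x := by
  simp [lorentzB_apply, mul_comm]

theorem lorentzB_nondegenerate : (lorentzB m).Nondegenerate := by
  refine LinearMap.BilinForm.nondegenerate_toBilin'_iff_det_ne_zero.2 ?_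
  rw [Matrix.det_diagonal, Finset.prod_ne_zero_iff]
  intro i _
  induction i using Fin.lastCases <;> simp

theorem lorentzQ_add (x y : Vec (m + 2)) :
    lorentzQ m (x + y) = lorentzQ m x + 2 * lorentzB m x y + lorentzQ m y := by
  simp only [← lorentzB_self, map_add, LinearMap.add_apply, lorentzB_comm y x]
  ring

theorem lorentzQ_smul (c : ℝ) (x : Vec (m + 2)) :
    lorentzQ m (c • x) = c ^ 2 * lorentzQ m x := by
  simp only [← lorentzB_self, map_smul, LinearMap.smul_apply, smul_eq_mul]
  ring

theorem eq_zero_of_lorentzQ_eq_zero_of_last_eq_zero {x : Vec (m + 2)}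
    (hq : lorentzQ m x = 0) (hl : x (Fin.last (m + 1)) = 0) : x = 0 := by
  have hsum : ∑ i : Fin (m + 1), x i.castSucc ^ 2 = 0 := by simpa [lorentzQ, hl] using hq
  rw [Finset.sum_eq_zero_iff_of_nonneg fun i _ => sq_nonneg _] at hsum
  funext i
  induction i using Fin.lastCases with
  | last => exact hl
  | cast j => simpa using hsum j (Finset.mem_univ j)

theorem last_ne_zero_of_lightlike {u : Vec (m + 2)} (hu : lorentzQ m u = 0) (hu0 : u ≠ 0) :
    u (Fin.last (m + 1)) ≠ 0 :=
  fun hl => hu0 (eq_zero_of_lorentzQ_eq_zero_of_last_eq_zero hu hl)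

theorem exists_eq_smul_of_lightlike_of_orthogonal {u x : Vec (m + 2)} (hu : lorentzQ m u = 0)
    (hu0 : u ≠ 0) (hx : lorentzQ m x = 0) (hux : lorentzB m u x = 0) : ∃ c : ℝ, x = c • u := by
  set c := x (Fin.last (m + 1)) / u (Fin.last (m + 1))
  refine ⟨c, sub_eq_zero.1 (eq_zero_of_lorentzQ_eq_zero_of_last_eq_zero ?_ ?_)⟩
  · rw [sub_eq_add_neg, ← neg_smul, lorentzQ_add, lorentzQ_smul, LinearMap.BilinForm.smul_right,
      lorentzB_comm, hux, hu, hx]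
    ring
  · simp [c, div_mul_cancel₀ _ (last_ne_zero_of_lightlike hu hu0)]

theorem exists_sq_norm_le_lorentzQ_of_timelike {t : Vec (m + 2)} (ht : lorentzQ m t < 0) :
    ∃ C : ℝ, ∀ x, lorentzB m t x = 0 → ‖x‖ ^ 2 ≤ C * lorentzQ m x := by
  set T := t (Fin.last (m + 1))
  set s := ∑ i : Fin (m + 1), t i.castSucc ^ 2
  have hsT : s < T ^ 2 := by simpa [lorentzQ, sub_neg] using ht
  refine ⟨2 * T ^ 2 / (T ^ 2 - s), fun x hx => ?_⟩
  set S := ∑ i : Fin (m + 1), x i.castSucc ^ 2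
  have hdot : ∑ i : Fin (m + 1), t i.castSucc * x i.castSucc = T * x (Fin.last (m + 1)) := by
    rw [lorentzB_apply] at hx; linarith
  have hCS := Finset.sum_mul_sq_le_sq_mul_sq Finset.univ (fun i : Fin (m + 1) => t i.castSucc)
    (fun i => x i.castSucc)
  rw [hdot] at hCS
  have hs : 0 ≤ s := by positivity
  have hS : 0 ≤ S := by positivity
  -- reverse Cauchy–Schwarz: `Q` is positive definite on the orthogonal complement of `t`
  have hQx : (T ^ 2 - s) * S ≤ T ^ 2 * lorentzQ m x := by simp only [lorentzQ]; nlinarith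
  have hlast : x (Fin.last (m + 1)) ^ 2 ≤ S := by nlinarith
  calc ‖x‖ ^ 2 ≤ ∑ i, x i ^ 2 := sq_norm_le_sum_sq x
    _ ≤ 2 * S := by rw [Fin.sum_univ_castSucc]; linarith
    _ ≤ 2 * T ^ 2 / (T ^ 2 - s) * lorentzQ m x := by
      rw [div_mul_eq_mul_div, le_div_iff₀ (by linarith)]; nlinarith

theorem exists_norm_le_of_lightlike_pair {u u' : Vec (m + 2)} (hu : lorentzQ m u = 0)
    (hu' : lorentzQ m u' = 0) (huu' : lorentzB m u u' = 1) :
    ∃ C : ℝ, ∀ x, ‖x‖ ≤ |lorentzB m u' x| * ‖u‖ + |lorentzB m u x| * ‖u'‖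
      + √(C * (lorentzQ m x - 2 * lorentzB m u x * lorentzB m u' x)) := by
  have hBuu : lorentzB m u u = 0 := (lorentzB_self u).trans hu
  have hBu'u' : lorentzB m u' u' = 0 := (lorentzB_self u').trans hu'
  have hBu'u : lorentzB m u' u = 1 := by rw [lorentzB_comm, huu']
  have ht : lorentzQ m (u - u') < 0 := by
    simp only [← lorentzB_self, map_sub, LinearMap.sub_apply, hBuu, hBu'u', huu', hBu'u]
    norm_num
  obtain ⟨C, hC⟩ := exists_sq_norm_le_lorentzQ_of_timelike ht
  refine ⟨C, fun x => ?_⟩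
  set a := lorentzB m u' x
  set b := lorentzB m u x
  set y := x - a • u - b • u'
  have hy : lorentzB m (u - u') y = 0 := by
    simp only [y, map_sub, map_smul, LinearMap.sub_apply, smul_eq_mul, hBuu, hBu'u', huu', hBu'u,
      a, b]
    ring
  have hQy : lorentzQ m y = lorentzQ m x - 2 * b * a := by
    simp only [y, ← lorentzB_self, map_sub, map_smul, LinearMap.sub_apply, LinearMap.smul_apply,
      smul_eq_mul, lorentzB_comm x u, lorentzB_comm x u', hBuu, hBu'u', huu', hBu'u, a, b]
    ring
  calc ‖x‖ = ‖a • u + b • u' + y‖ := by congr 1; simp only [y]; abel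
    _ ≤ ‖a • u‖ + ‖b • u'‖ + ‖y‖ := norm_add₃_le
    _ ≤ _ := by
      rw [norm_smul, norm_smul, Real.norm_eq_abs, Real.norm_eq_abs, ← hQy]
      gcongr
      exact abs_norm y ▸ Real.abs_le_sqrt (hC y hy)

section Conformal

variable {L : Module.End ℝ (Vec (m + 2))} {μ : ℝ} (hL : ∀ x, lorentzQ m (L x) = μ * lorentzQ m x)
include hL

theorem lorentzB_map_map (x y : Vec (m + 2)) :
    lorentzB m (L x) (L y) = μ * lorentzB m x y := by
  have h := lorentzQ_add (L x) (L y)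
  rw [← map_add, hL, hL, hL, lorentzQ_add] at h
  linarith

theorem lorentzQ_pow_apply (k : ℕ) (x : Vec (m + 2)) :
    lorentzQ m ((L ^ k) x) = μ ^ k * lorentzQ m x := by
  induction k with
  | zero => simp
  | succ k ih => rw [pow_succ', Module.End.mul_apply, hL, ih, pow_succ']; ring

theorem lorentzQ_eq_zero_of_map_eq_smul {c : ℝ} (hcμ : c ^ 2 ≠ μ) {x : Vec (m + 2)}
    (hx : L x = c • x) : lorentzQ m x = 0 := by
  have h := hL x
  rw [hx, lorentzQ_smul] at h
  exact (mul_eq_zero.1 (by linarith : (c ^ 2 - μ) * lorentzQ m x = 0)).resolve_left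
    (sub_ne_zero.2 hcμ)

theorem exists_lightlike_partner (hμ0 : μ ≠ 0) (hμ1 : μ ≠ 1) {u : Vec (m + 2)}
    (hu : lorentzQ m u = 0) (hu0 : u ≠ 0) (hLu : L u = u) :
    ∃ u', lorentzQ m u' = 0 ∧ lorentzB m u u' = 1 ∧ L u' = μ • u' := by
  -- `lorentzB m u` is an eigenvector of the transpose of `L`, so `μ` is an eigenvalue of `L`
  have hdual : Module.End.HasEigenvector L.dualMap μ (lorentzB m u) := by
    refine ⟨Module.End.mem_eigenspace_iff.2 ?_, fun h0 => hu0 ?_⟩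
    · ext y
      simp [← lorentzB_map_map hL, hLu]
    · exact lorentzB_nondegenerate.1 u fun y => by simp [h0]
  obtain ⟨u₁, hu₁⟩ :=
    (Module.End.hasEigenvalue_of_hasEigenvector hdual).of_dualMap.exists_hasEigenvector
  have hLu₁ : L u₁ = μ • u₁ := Module.End.mem_eigenspace_iff.1 hu₁.1
  have hQu₁ : lorentzQ m u₁ = 0 :=
    lorentzQ_eq_zero_of_map_eq_smul hL (by rwa [sq, ne_eq, mul_eq_left₀ hμ0]) hLu₁
  have huu₁ : lorentzB m u u₁ ≠ 0 := by
    intro h0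
    obtain ⟨c, hc⟩ := exists_eq_smul_of_lightlike_of_orthogonal hu hu0 hQu₁ h0
    have h : (μ - 1) • u₁ = 0 := by rw [sub_smul, one_smul, ← hLu₁, hc, map_smul, hLu, sub_self]
    exact hu₁.2 ((smul_eq_zero.1 h).resolve_left (sub_ne_zero.2 hμ1))
  refine ⟨(lorentzB m u u₁)⁻¹ • u₁, ?_, ?_, ?_⟩
  · rw [lorentzQ_smul, hQu₁, mul_zero]
  · rw [LinearMap.BilinForm.smul_right, inv_mul_cancel₀ huu₁]
  · rw [map_smul, hLu₁, smul_comm]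

theorem exists_norm_pow_apply_le (hμ0 : 0 < μ) (hμ1 : μ ≤ 1) {u u' : Vec (m + 2)}
    (hu : lorentzQ m u = 0) (hu' : lorentzQ m u' = 0) (huu' : lorentzB m u u' = 1)
    (hLu : L u = u) (hLu' : L u' = μ • u') (v : Vec (m + 2)) :
    ∃ R : ℝ, ∀ k : ℕ, ‖(L ^ k) v‖ ≤ R := by
  obtain ⟨C, hC⟩ := exists_norm_le_of_lightlike_pair hu hu' huu'
  have hBu : ∀ x, lorentzB m u (L x) = μ * lorentzB m u x := fun x => by
    rw [← lorentzB_map_map hL, hLu]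
  have hBu' : ∀ x, lorentzB m u' (L x) = lorentzB m u' x := fun x => by
    have h := lorentzB_map_map hL u' x
    rw [hLu', LinearMap.BilinForm.smul_left] at h
    exact mul_left_cancel₀ hμ0.ne' h
  set a := lorentzB m u' v
  set b := lorentzB m u v
  have horbit : ∀ k : ℕ, lorentzB m u ((L ^ k) v) = μ ^ k * b ∧ lorentzB m u' ((L ^ k) v) = a := by
    intro k
    induction k with
    | zero => simp [a, b]
    | succ k ih =>
      rw [pow_succ', Module.End.mul_apply, hBu, hBu', ih.1, ih.2]
      exact ⟨by ring, rfl⟩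
  refine ⟨|a| * ‖u‖ + |b| * ‖u'‖ + √|C * (lorentzQ m v - 2 * b * a)|, fun k => ?_⟩
  have hμk : 0 ≤ μ ^ k := by positivity
  have hμk1 : μ ^ k ≤ 1 := pow_le_one₀ hμ0.le hμ1
  have hb : |μ ^ k * b| ≤ |b| := by
    rw [abs_mul, abs_of_nonneg hμk]
    exact mul_le_of_le_one_left (abs_nonneg b) hμk1
  have hD : C * (μ ^ k * lorentzQ m v - 2 * (μ ^ k * b) * a)
      ≤ |C * (lorentzQ m v - 2 * b * a)| := calc
    _ = μ ^ k * (C * (lorentzQ m v - 2 * b * a)) := by ring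
    _ ≤ μ ^ k * |C * (lorentzQ m v - 2 * b * a)| := by gcongr; exact le_abs_self _
    _ ≤ |C * (lorentzQ m v - 2 * b * a)| := mul_le_of_le_one_left (abs_nonneg _) hμk1
  refine (hC _).trans ?_
  rw [(horbit k).1, (horbit k).2, lorentzQ_pow_apply hL]
  exact add_le_add (add_le_add le_rfl (mul_le_mul_of_nonneg_right hb (norm_nonneg _)))
    (Real.sqrt_le_sqrt hD)

end Conformal

end Lorentz

section Translations

variable {n : ℕ}

def translationVectors (Γ : Subgroup (AffGroup n)) : Set (Vec n) :=
  {w | ∃ δ ∈ Γ, ∀ x, δ x = x + w}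

theorem linear_mem_translationVectors {Γ : Subgroup (AffGroup n)} {γ : AffGroup n} (hγ : γ ∈ Γ)
    {w : Vec n} (hw : w ∈ translationVectors Γ) : γ.linear w ∈ translationVectors Γ := by
  obtain ⟨δ, hδ, hδw⟩ := hw
  refine ⟨γ * δ * γ⁻¹, Γ.mul_mem (Γ.mul_mem hγ hδ) (Γ.inv_mem hγ), fun x => ?_⟩
  have hγγ : γ (γ⁻¹ x) = x := γ.apply_symm_apply x
  change γ (δ (γ⁻¹ x)) = _
  rw [hδw, add_comm, ← vadd_eq_add, γ.map_vadd, hγγ, vadd_eq_add, add_comm]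

theorem ProperlyDisc.finite_translationVectors_inter_closedBall {Γ : Subgroup (AffGroup n)}
    (hPD : ProperlyDisc Γ) (R : ℝ) : (translationVectors Γ ∩ Metric.closedBall 0 R).Finite := by
  refine ((hPD _ (isCompact_closedBall 0 R)).image fun γ => γ 0).subset ?_
  rintro w ⟨⟨δ, hδ, hδw⟩, hw⟩
  have hR : 0 ≤ R := (norm_nonneg w).trans (mem_closedBall_zero_iff.1 hw)
  refine ⟨δ, ⟨hδ, w, ⟨0, by simpa using hR, ?_⟩, hw⟩, ?_⟩ <;> simp [hδw]

end Translations

theorem one_le_of_lorentzQ_linear_eq_mul {m : ℕ} {Γ : Subgroup (AffGroup (m + 2))}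
    (hFree : FreeAction Γ) (hPD : ProperlyDisc Γ) {v : Vec (m + 2)}
    (hv : v ∈ translationVectors Γ) (hQv : lorentzQ m v ≠ 0) {γ : AffGroup (m + 2)}
    (hγ : γ ∈ Γ) {μ : ℝ} (hμ0 : 0 < μ) (hL : ∀ x, lorentzQ m (γ.linear x) = μ * lorentzQ m x) :
    1 ≤ μ := by
  by_contra! hμ1
  set L : Module.End ℝ (Vec (m + 2)) := γ.linear.toLinearMap
  replace hL : ∀ x, lorentzQ m (L x) = μ * lorentzQ m x := hL
  have h1μ : (1 : ℝ) ^ 2 ≠ μ := by simpa using hμ1.ne'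
  obtain ⟨u, hu0, hLu⟩ : ∃ u, u ≠ 0 ∧ L u = u := by
    by_contra! h
    obtain ⟨x, hx⟩ := γ.exists_apply_eq_self fun u hu => by_contra fun hu0 => h u hu0 hu
    refine hQv (lorentzQ_eq_zero_of_map_eq_smul hL h1μ ?_)
    simp [L, hFree γ hγ ⟨x, hx⟩, AffineEquiv.one_def]
  have hu : lorentzQ m u = 0 := lorentzQ_eq_zero_of_map_eq_smul hL h1μ (by simpa using hLu)
  obtain ⟨u', hu', huu', hLu'⟩ := exists_lightlike_partner hL hμ0.ne' hμ1.ne hu hu0 hLu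
  obtain ⟨R, hR⟩ := exists_norm_pow_apply_le hL hμ0 hμ1.le hu hu' huu' hLu hLu' v
  have hmem : ∀ k : ℕ, (L ^ k) v ∈ translationVectors Γ ∩ Metric.closedBall 0 R := by
    refine fun k => ⟨?_, mem_closedBall_zero_iff.2 (hR k)⟩
    induction k with
    | zero => exact hv
    | succ k ih => rw [pow_succ', Module.End.mul_apply]; exact linear_mem_translationVectors hγ ih
  have hinj : Function.Injective fun k : ℕ => (L ^ k) v := fun j k hjk =>
    pow_right_injective₀ hμ0 hμ1.ne <| mul_right_cancel₀ hQv <| by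
      simpa only [lorentzQ_pow_apply hL] using congrArg (lorentzQ m) hjk
  exact Set.infinite_range_of_injective hinj
    ((hPD.finite_translationVectors_inter_closedBall R).subset (Set.range_subset_iff.2 hmem))

theorem statement5_general (m : ℕ) (Γ : Subgroup (AffGroup (m + 2)))
    (hFree : FreeAction Γ) (hPD : ProperlyDisc Γ)
    (τ : AffGroup (m + 2)) (hτ : τ ∈ Γ) (v : Vec (m + 2))
    (hτv : ∀ x : Vec (m + 2), τ x = x + v) (hQv : lorentzQ m v ≠ 0) :
    ∀ γ ∈ Γ, ∀ (lam : ℝ) (A : Vec (m + 2) →ₗ[ℝ] Vec (m + 2)), 0 < lam →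
      (∀ v', lorentzQ m (A v') = lorentzQ m v') →
      (∀ v', γ.linear v' = lam • A v') → lam = 1 := by
  intro γ hγ lam A hlam hA hlin
  have hv : v ∈ translationVectors Γ := ⟨τ, hτ, hτv⟩
  have hQ : ∀ x, lorentzQ m (γ.linear x) = lam ^ 2 * lorentzQ m x := fun x => by
    rw [hlin, lorentzQ_smul, hA]
  have hQinv : ∀ x, lorentzQ m ((γ⁻¹).linear x) = (lam ^ 2)⁻¹ * lorentzQ m x := fun x => by
    rw [eq_inv_mul_iff_mul_eq₀ (by positivity), ← hQ]
    congr 1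
    exact γ.linear.apply_symm_apply x
  have h1 := one_le_of_lorentzQ_linear_eq_mul hFree hPD hv hQv hγ (by positivity) hQ
  have h2 := one_le_of_lorentzQ_linear_eq_mul hFree hPD hv hQv (Γ.inv_mem hγ) (by positivity) hQinv
  nlinarith [one_le_inv₀ (by positivity : (0:ℝ) < lam ^ 2) |>.1 h2]

/-- If `Γ ≤ Sim_L(ℝ^{m+2})` acts freely and properly discontinuously on `ℝ^{m+2}` and
contains a pure translation by a vector `v` with `Q(v) ≠ 0`, then every element of `Γ`
has similarity factor `λ = 1`. -/
theorem statement5 (m : ℕ) (Γ : Subgroup (AffGroup (m + 2)))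
    (hSim : ∀ γ ∈ Γ, InSimL m γ)
    (hFree : FreeAction Γ) (hPD : ProperlyDisc Γ)
    (τ : AffGroup (m + 2)) (hτ : τ ∈ Γ) (v : Vec (m + 2))
    (hτv : ∀ x : Vec (m + 2), τ x = x + v) (hQv : lorentzQ m v ≠ 0) :
    ∀ γ ∈ Γ, ∀ (lam : ℝ) (A : Vec (m + 2) →ₗ[ℝ] Vec (m + 2)), 0 < lam →
      (∀ v', lorentzQ m (A v') = lorentzQ m v') →
      (∀ v', γ.linear v' = lam • A v') → lam = 1 :=
  statement5_general m Γ hFree hPD τ hτ v hτv hQv
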